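/- (Key step in the proof of Lemma 8.) Every path from v0 to a vertex x that contains some vertex u with u ∉ F and u ≠ x has cost at least ⨅ {D u + w u v : E u v ∧ u ∉ F}, the infimum over all edges whose tail is unfixed. -/

import Mathlib

open scoped ENNReal

variable {V : Type*}

/-- `IsPath E v0 x p` means `p` is a finite sequence of vertices starting at `v0`,
ending at `x`, with consecutive vertices joined by edges of `E`. -/
def IsPath (E : V → V → Prop) (v0 x : V) (p : List V) : Prop :=
  p.Chain' E ∧ p.head? = some v0 ∧ p.getLast? = some x

/-- The cost of a path: the sum of the weights of its consecutive edges. -/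
noncomputable def pathCost (w : V → V → ℝ≥0∞) (p : List V) : ℝ≥0∞ :=
  ((p.zip p.tail).map fun q => w q.1 q.2).sum

/-- `cost E w v0 x` : the infimum of the costs of all paths from `v0` to `x`
(`∞` if `x` is unreachable from `v0`). -/
noncomputable def cost (E : V → V → Prop) (w : V → V → ℝ≥0∞) (v0 x : V) : ℝ≥0∞ :=
  ⨅ p : {p : List V // IsPath E v0 x p}, pathCost w p.1

/-- An `F`-path from `v0` to `x` : a path all of whose vertices other than the
final vertex `x` lie in `F`. `Dfun E w v0 F x` is the infimum of the costs of
`F`-paths from `v0` to `x` (`∞` if no `F`-path to `x` exists). -/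
noncomputable def Dfun (E : V → V → Prop) (w : V → V → ℝ≥0∞) (v0 : V) (F : Set V)
    (x : V) : ℝ≥0∞ :=
  ⨅ p : {p : List V // IsPath E v0 x p ∧ ∀ v ∈ p.dropLast, v ∈ F}, pathCost w p.1

/-! Cut the path at its first unfixed vertex `a`. All vertices before `a` are fixed and `u ≠ x` is
unfixed, so `a` is not the final vertex and the path continues along an edge `a → b`. The part of
the path up to `a` is an `F`-path, hence costs at least `D a`, and the edge adds `w a b`. -/

theorem List.exists_eq_append_cons_forall_mem_of_notMem {α : Type*} {s : Set α} {l : List α}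
    {u : α} (hu : u ∈ l) (hus : u ∉ s) :
    ∃ q a r, l = q ++ a :: r ∧ (∀ v ∈ q, v ∈ s) ∧ a ∉ s := by
  classical
  obtain ⟨a, hfind⟩ := Option.isSome_iff_exists.1
    (List.find?_isSome (p := fun v => decide (v ∉ s)) |>.2 ⟨u, hu, by simpa⟩)
  obtain ⟨ha, q, r, rfl, hq⟩ := List.find?_eq_some_iff_append.1 hfind
  exact ⟨q, a, r, rfl, fun v hv => by simpa using hq v hv, by simpa using ha⟩

lemma pathCost_cons_cons (w : V → V → ℝ≥0∞) (a b : V) (l : List V) :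
    pathCost w (a :: b :: l) = w a b + pathCost w (b :: l) := by
  simp [pathCost]

lemma pathCost_append_cons (w : V → V → ℝ≥0∞) (q : List V) (a : V) (r : List V) :
    pathCost w (q ++ a :: r) = pathCost w (q ++ [a]) + pathCost w (a :: r) := by
  induction q with
  | nil => simp [pathCost]
  | cons c q ih =>
    cases q with
    | nil => simp [pathCost]
    | cons d q => simp_all only [List.cons_append, pathCost_cons_cons, add_assoc]

lemma IsPath.append_cons_prefix {E : V → V → Prop} {v0 x a : V} {q r : List V}
    (hp : IsPath E v0 x (q ++ a :: r)) : IsPath E v0 a (q ++ [a]) := by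
  obtain ⟨hchain, hhead, -⟩ := hp
  refine ⟨?_, ?_, List.getLast?_concat⟩
  · rw [← List.singleton_append, ← List.append_assoc] at hchain
    exact hchain.left_of_append
  · cases q <;> simpa using hhead

lemma Dfun_le_pathCost {E : V → V → Prop} (w : V → V → ℝ≥0∞) {v0 x : V} {F : Set V}
    {p : List V} (hp : IsPath E v0 x p) (hF : ∀ v ∈ p.dropLast, v ∈ F) :
    Dfun E w v0 F x ≤ pathCost w p :=
  iInf_le_of_le ⟨p, hp, hF⟩ le_rfl

theorem path_through_unfixed_cost_general (E : V → V → Prop) (w : V → V → ℝ≥0∞)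
    (v0 : V) (F : Set V) (x : V)
    (p : List V) (hp : IsPath E v0 x p)
    (u : V) (hu : u ∈ p) (huF : u ∉ F) (hux : u ≠ x) :
    (⨅ e : {e : V × V // E e.1 e.2 ∧ e.1 ∉ F},
        (Dfun E w v0 F e.1.1 + w e.1.1 e.1.2)) ≤ pathCost w p := by
  obtain ⟨q, a, r, rfl, hqF, haF⟩ := List.exists_eq_append_cons_forall_mem_of_notMem hu huF
  obtain ⟨b, r, rfl⟩ : ∃ b r', r = b :: r' := by
    refine List.exists_cons_of_ne_nil fun hr => ?_
    subst hr
    have hax : a = x := by simpa using hp.2.2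
    rcases List.mem_append.1 hu with huq | hua
    · exact huF (hqF u huq)
    · exact hux ((List.mem_singleton.1 hua).trans hax)
  have hab : E a b := (List.isChain_cons_cons.1 hp.1.right_of_append).1
  calc (⨅ e : {e : V × V // E e.1 e.2 ∧ e.1 ∉ F}, (Dfun E w v0 F e.1.1 + w e.1.1 e.1.2))
      ≤ Dfun E w v0 F a + w a b := iInf_le_of_le ⟨(a, b), hab, haF⟩ le_rfl
    _ ≤ pathCost w (q ++ [a]) + w a b := by
      gcongr
      exact Dfun_le_pathCost w hp.append_cons_prefix (by rwa [List.dropLast_concat])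
    _ ≤ pathCost w (q ++ a :: b :: r) := by
      rw [pathCost_append_cons w q a (b :: r), pathCost_cons_cons, ← add_assoc]
      exact le_self_add

/-- Key step in the proof of Lemma 8: every path from `v0` to `x` passing through
some unfixed vertex `u ≠ x` has cost at least
`⨅ {D u + w u v : E u v ∧ u ∉ F}`. -/
theorem path_through_unfixed_cost [Fintype V] (E : V → V → Prop) (w : V → V → ℝ≥0∞)
    (hpos : ∀ u v, E u v → 0 < w u v) (hfin : ∀ u v, E u v → w u v < ⊤)
    (v0 : V) (F : Set V) (hv0 : v0 ∈ F) (x : V)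
    (p : List V) (hp : IsPath E v0 x p)
    (u : V) (hu : u ∈ p) (huF : u ∉ F) (hux : u ≠ x) :
    (⨅ e : {e : V × V // E e.1 e.2 ∧ e.1 ∉ F},
        (Dfun E w v0 F e.1.1 + w e.1.1 e.1.2)) ≤ pathCost w p :=
  path_through_unfixed_cost_general E w v0 F x p hp u hu huF hux
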